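/- arXiv:1809.06543 — 2 statements merged into one kernel-verified Lean document; each statement's English description precedes it below -/
import Mathlib

section
/- Let p be a prime, G a finite abelian p-group isomorphic to ℤ/p^{α_1}ℤ ⊕ ... ⊕ ℤ/p^{α_r}ℤ, and let g_1, ..., g_n be any sequence in G with n ≥ Σ_{j=1}^r (p^{α_j} - 1) + 1. Then there exists a nonempty subset I ⊆ {1, ..., n} with Σ_{i ∈ I} g_i = 0 and |I| ≤ n. -/
/-!
Work in the group algebra `𝔽_p[G]`. The elements `t_j = X^{e_j} - 1` generate an ideal `J`
containing every `X^a - 1`, and by Frobenius `t_j ^ p^{α_j} = X^{p^{α_j} e_j} - 1 = 0`; so by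
pigeonhole any product of more than `∑ (p^{α_j} - 1)` generators vanishes, i.e. `J ^ n = 0`.
Hence `∏ (1 - X^{g_i}) = 0`. Its coefficient at `0` is `∑ (-1)^{|I|}` over the zero-sum
subsets `I`, which would be `1` if `I = ∅` were the only one.
-/

open Finset AddMonoidAlgebra

theorem prod_comp_eq_zero_of_pow_eq_zero {M ι κ : Type*} [CommMonoidWithZero M] [Fintype ι]
    [Fintype κ] {x : ι → M} {k : ι → ℕ} (hx : ∀ j, x j ^ k j = 0)
    (hκ : ∑ j, (k j - 1) < Fintype.card κ) (f : κ → ι) : ∏ i, x (f i) = 0 := by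
  classical
  have hfib : ∑ j, (k j - 1) < ∑ j, #{i | f i = j} := by
    rwa [← card_eq_sum_card_fiberwise fun i _ => mem_univ (f i), card_univ]
  obtain ⟨j, -, hj⟩ := exists_lt_of_sum_lt hfib
  rw [← prod_fiberwise univ f]
  refine prod_eq_zero (mem_univ j) ?_
  rw [prod_congr rfl fun i hi => by rw [(mem_filter.mp hi).2], prod_const]
  exact pow_eq_zero_of_le (by omega) (hx j)

theorem Ideal.span_range_pow_eq_bot_of_pow_eq_zero {R ι : Type*} [CommSemiring R] [Fintype ι]
    {x : ι → R} {k : ι → ℕ} (hx : ∀ j, x j ^ k j = 0) {m : ℕ}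
    (hm : ∑ j, (k j - 1) < m) :
    Ideal.span (Set.range x) ^ m = ⊥ := by
  rw [Ideal.span, Submodule.span_pow, eq_bot_iff, Submodule.span_le]
  intro _ hy
  obtain ⟨y, rfl⟩ := Set.mem_pow.mp hy
  choose j hj using fun i => (y i).2
  rw [SetLike.mem_coe, Submodule.mem_bot, List.prod_ofFn]
  simp_rw [← hj]
  exact prod_comp_eq_zero_of_pow_eq_zero hx (by rwa [Fintype.card_fin]) j

namespace AddMonoidAlgebra

variable {k G : Type*} [CommRing k] [AddCommMonoid G]

theorem single_sub_one_mem_of_mem_closure {I : Ideal k[G]} {S : Set G}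
    (hS : ∀ s ∈ S, single s 1 - 1 ∈ I) {a : G} (ha : a ∈ AddSubmonoid.closure S) :
    single a (1 : k) - 1 ∈ I := by
  induction ha using AddSubmonoid.closure_induction with
  | mem s hs => exact hS s hs
  | zero => simp [← one_def]
  | add a b _ _ ha hb =>
    have hab : single (a + b) (1 : k) - 1 =
        (single a 1 - 1) * (single b 1 - 1) + (single a 1 - 1) + (single b 1 - 1) := by
      rw [← one_mul (1 : k), ← single_mul_single, one_mul]; ring
    rw [hab]
    exact add_mem (add_mem (I.mul_mem_right _ ha) ha) hb

theorem single_sub_one_pow_expChar_pow (p : ℕ) [ExpChar k p] (a : G) (n : ℕ) :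
    (single a (1 : k) - 1) ^ p ^ n = single (p ^ n • a) 1 - 1 := by
  have := ExpChar.of_injective_algebraMap' k (A := k[G]) p
  rw [sub_pow_expChar_pow, single_pow, one_pow, one_pow]

theorem exists_nonempty_sum_eq_zero_of_prod_one_sub_single_eq_zero [Nontrivial k] {ι : Type*}
    {s : Finset ι} {g : ι → G} (h : ∏ i ∈ s, (1 - single (g i) (1 : k)) = 0) :
    ∃ I ⊆ s, I.Nonempty ∧ ∑ i ∈ I, g i = 0 := by
  by_contra! hne
  have hexp : ∏ i ∈ s, (1 - single (g i) (1 : k)) =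
      ∑ I ∈ s.powerset, single (∑ i ∈ I, g i) ((-1) ^ #I) := by
    simp_rw [sub_eq_add_neg, ← single_neg, prod_one_add, prod_single, prod_const]
  have hcoeff := congrArg (coeff · 0) (hexp.symm.trans h)
  simp only [coeff_sum] at hcoeff
  rw [Finsupp.finsetSum_apply, sum_eq_single_of_mem ∅ (empty_mem_powerset s)] at hcoeff
  · simp at hcoeff
  · intro I hI hIne
    exact Finsupp.single_eq_of_ne' (hne I (mem_powerset.mp hI) (nonempty_iff_ne_empty.mpr hIne))

end AddMonoidAlgebra

theorem Pi.mem_closure_range_single_one {ι : Type*} [Fintype ι] [DecidableEq ι] {n : ι → ℕ}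
    [∀ j, NeZero (n j)] (a : ∀ j, ZMod (n j)) :
    a ∈ AddSubmonoid.closure (Set.range fun j => (Pi.single j 1 : ∀ j, ZMod (n j))) := by
  rw [← Finset.univ_sum_single a]
  refine sum_mem fun j _ => ?_
  have : Pi.single j (a j) = (a j).val • (Pi.single j 1 : ∀ j, ZMod (n j)) := by
    rw [← Pi.single_smul, nsmul_one, ZMod.natCast_zmod_val]
  rw [this]
  exact nsmul_mem (AddSubmonoid.subset_closure (Set.mem_range_self j)) _

theorem olson_davenport_general (p : ℕ) (hp : p.Prime) (r : ℕ) (α : Fin r → ℕ)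
    (n : ℕ) (hn : (∑ j, (p ^ α j - 1)) + 1 ≤ n)
    (g : Fin n → ∀ j, ZMod (p ^ α j)) :
    ∃ I : Finset (Fin n), I.Nonempty ∧ I.card ≤ n ∧ ∑ i ∈ I, g i = 0 := by
  have := Fact.mk hp
  let t (j : Fin r) : (ZMod p)[∀ j, ZMod (p ^ α j)] := single (Pi.single j 1) 1 - 1
  have ht (j : Fin r) : t j ^ p ^ α j = 0 := by
    rw [single_sub_one_pow_expChar_pow, ← Pi.single_smul, nsmul_one, ZMod.natCast_self,
      Pi.single_zero, ← one_def, sub_self]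
  have hJ : Ideal.span (Set.range t) ^ n = ⊥ :=
    Ideal.span_range_pow_eq_bot_of_pow_eq_zero ht (by omega)
  have hmem (a : ∀ j, ZMod (p ^ α j)) : single a (1 : ZMod p) - 1 ∈ Ideal.span (Set.range t) :=
    single_sub_one_mem_of_mem_closure
      (by rintro _ ⟨j, rfl⟩; exact Ideal.subset_span ⟨j, rfl⟩)
      (Pi.mem_closure_range_single_one a)
  have hprod : ∏ i, (1 - single (g i) (1 : ZMod p)) = 0 := by
    have := Ideal.prod_mem_prod (s := univ) (I := fun _ => Ideal.span (Set.range t))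
      fun i _ => neg_sub (single (g i) (1 : ZMod p)) 1 ▸ neg_mem (hmem (g i))
    rwa [prod_const, card_univ, Fintype.card_fin, hJ, Ideal.mem_bot] at this
  obtain ⟨I, -, hI, hsum⟩ := exists_nonempty_sum_eq_zero_of_prod_one_sub_single_eq_zero hprod
  exact ⟨I, hI, (card_le_univ I).trans (Fintype.card_fin n).le, hsum⟩

/-- Olson's theorem (Davenport constant bound): any sequence of length
`n ≥ 1 + ∑ (p^{αⱼ}-1)` in `ℤ/p^{α₁}ℤ ⊕ ⋯ ⊕ ℤ/p^{α_r}ℤ` has a nonempty zero-sum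
subsequence. -/
theorem olson_davenport (p : ℕ) (hp : p.Prime) (r : ℕ) (α : Fin r → ℕ)
    (hα : ∀ j, 0 < α j) (n : ℕ) (hn : (∑ j, (p ^ α j - 1)) + 1 ≤ n)
    (g : Fin n → ∀ j, ZMod (p ^ α j)) :
    ∃ I : Finset (Fin n), I.Nonempty ∧ I.card ≤ n ∧ ∑ i ∈ I, g i = 0 :=
  olson_davenport_general p hp r α n hn g
end

section
/- Let p be a prime and G = ℤ/p^{α_1}ℤ ⊕ ... ⊕ ℤ/p^{α_r}ℤ. Suppose n > Σ_{j=1}^r (p^{α_j} - 1), I ⊆ {1,...,n} with |I| > Σ_{j=1}^r (p^{α_j} - 1), and φ : {1,...,n} → G. Then there exists a proper subset I' ⊊ I with Σ_{i ∈ I'} φ(i) = Σ_{i ∈ I} φ(i). -/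
/-!
In the group algebra `𝔽_p[G]` the augmentation ideal is generated by the elements `[e_j] - 1`
for the standard generators `e_j`, and `([e_j] - 1) ^ p ^ α_j = [p ^ α_j • e_j] - 1 = 0` by the
Frobenius. By pigeonhole on the generators, a product of more than `∑ j, (p ^ α_j - 1)` elements
of this ideal vanishes. In particular `∏ i ∈ I, ([φ i] - 1) = 0`; expanding it as
`∑ T ⊆ I, ± [∑ i ∈ T, φ i]`, the term `T = I` contributes `1` to the coefficient of
`[∑ i ∈ I, φ i]`, so it must be cancelled by a proper subset `T ⊂ I` with the same sum.
-/

open Finset AddMonoidAlgebra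

section NilpotentGenerators

variable {R ι : Type*} [CommSemiring R] [Fintype ι] {t : ι → R} {N : ι → ℕ}

theorem prod_comp_eq_zero_of_pow_eq_zero_s18 (ht : ∀ j, t j ^ N j = 0) {κ : Type*} (s : Finset κ)
    (f : κ → ι) (hs : ∑ j, (N j - 1) < #s) : ∏ i ∈ s, t (f i) = 0 := by
  classical
  obtain ⟨j, hj⟩ : ∃ j, N j ≤ #{i ∈ s | f i = j} := by
    by_contra! h
    have : #s ≤ ∑ j, (N j - 1) := calc
      #s = ∑ j, #{i ∈ s | f i = j} := card_eq_sum_card_fiberwise fun _ _ => mem_coe.2 (mem_univ _)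
      _ ≤ ∑ j, (N j - 1) := sum_le_sum fun j _ => Nat.le_sub_one_of_lt (h j)
    omega
  rw [← prod_fiberwise' s f t]
  refine prod_eq_zero (mem_univ j) ?_
  rw [prod_const, pow_eq_zero_of_le hj (ht j)]

theorem Ideal.span_range_pow_eq_bot (ht : ∀ j, t j ^ N j = 0) {m : ℕ}
    (hm : ∑ j, (N j - 1) < m) : Ideal.span (Set.range t) ^ m = ⊥ := by
  rw [Ideal.span, Submodule.span_pow, Submodule.span_eq_bot]
  intro x hx
  obtain ⟨g, rfl⟩ := Set.mem_pow.1 hx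
  choose f hf using fun i => (g i).2
  rw [List.prod_ofFn, ← prod_comp_eq_zero_of_pow_eq_zero_s18 ht univ f (by simpa using hm)]
  exact prod_congr rfl fun i _ => (hf i).symm

end NilpotentGenerators

namespace AddMonoidAlgebra

variable {k G : Type*} [CommRing k]

theorem single_add_sub_one [AddCommMonoid G] (g h : G) :
    (single (g + h) 1 - 1 : AddMonoidAlgebra k G) =
      (single g 1 - 1) + (single h 1 - 1) + (single g 1 - 1) * (single h 1 - 1) := by
  rw [show single (g + h) (1 : k) = single g 1 * single h 1 by rw [single_mul_single, one_mul]]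
  ring

theorem single_sub_one_mem_span_of_mem_closure [AddCommGroup G] {ι : Type*} (e : ι → G) {g : G}
    (hg : g ∈ AddSubgroup.closure (Set.range e)) :
    single g (1 : k) - 1 ∈ Ideal.span (Set.range fun j => single (e j) (1 : k) - 1) := by
  induction hg using AddSubgroup.closure_induction with
  | mem _ hx =>
    obtain ⟨j, rfl⟩ := hx
    exact Ideal.subset_span ⟨j, rfl⟩
  | zero => simp [one_def]
  | add g h _ _ hg hh =>
    rw [single_add_sub_one]
    exact add_mem (add_mem hg hh) (Ideal.mul_mem_right _ _ hg)
  | neg g _ hg =>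
    have : (single (-g) 1 - 1 : AddMonoidAlgebra k G) = -single (-g) 1 * (single g 1 - 1) := by
      rw [neg_mul, mul_sub, single_mul_single, neg_add_cancel, one_mul, mul_one, one_def, neg_sub]
    rw [this]
    exact Ideal.mul_mem_left _ _ hg

theorem single_sub_one_pow_eq_zero [AddCommMonoid G] (p : ℕ) [Fact p.Prime] [CharP k p]
    {g : G} {a : ℕ} (hg : p ^ a • g = 0) : (single g (1 : k) - 1) ^ p ^ a = 0 := by
  have := charP_of_injective_algebraMap' k (A := AddMonoidAlgebra k G) p
  rw [sub_pow_char_pow, one_pow, single_pow, one_pow, hg, ← one_def, sub_self]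

theorem prod_single_sub_one [AddCommMonoid G] {ι : Type*} [DecidableEq ι] (s : Finset ι)
    (f : ι → G) :
    ∏ i ∈ s, (single (f i) (1 : k) - 1) =
      ∑ t ∈ s.powerset, single (∑ i ∈ s \ t, f i) ((-1) ^ #t) := by
  rw [prod_sub]
  refine sum_congr rfl fun t _ => ?_
  rw [prod_const_one, mul_one, prod_single, prod_const_one,
    show ((-1) ^ #t : AddMonoidAlgebra k G) = algebraMap k _ ((-1) ^ #t) by
      rw [map_pow, map_neg, map_one],
    ← Algebra.smul_def, smul_single, smul_eq_mul, mul_one]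

theorem exists_ssubset_sum_eq_of_prod_single_sub_one_eq_zero [AddCommMonoid G] [Nontrivial k]
    {ι : Type*} {s : Finset ι} {f : ι → G} (h : ∏ i ∈ s, (single (f i) (1 : k) - 1) = 0) :
    ∃ t ⊂ s, ∑ i ∈ t, f i = ∑ i ∈ s, f i := by
  classical
  by_contra! hne
  have hcoeff : (∏ i ∈ s, (single (f i) (1 : k) - 1)).coeff (∑ i ∈ s, f i) = 1 := by
    rw [prod_single_sub_one, coeff_sum, Finsupp.finsetSum_apply,
      sum_eq_single_of_mem ∅ (empty_mem_powerset s)]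
    · simp
    · intro t ht ht0
      rw [coeff_single, Finsupp.single_apply, if_neg]
      exact hne _ (sdiff_ssubset (mem_powerset.1 ht) (nonempty_iff_ne_empty.2 ht0))
  simp [h] at hcoeff

end AddMonoidAlgebra

theorem ZMod.pi_mem_closure_range_single_one {ι : Type*} [Fintype ι] [DecidableEq ι] {n : ι → ℕ}
    (g : ∀ j, ZMod (n j)) : g ∈ AddSubgroup.closure (Set.range fun j => Pi.single j 1) := by
  rw [← univ_sum_single g]
  refine sum_mem fun j _ => ?_
  rw [← ZMod.intCast_zmod_cast (g j), ← zsmul_one, Pi.single_smul]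
  exact zsmul_mem (AddSubgroup.subset_closure (Set.mem_range_self j)) _

theorem descent_step_general (p : ℕ) (hp : p.Prime) (r : ℕ) (α : Fin r → ℕ) (n : ℕ)
    (I : Finset (Fin n)) (hI : ∑ j, (p ^ α j - 1) < I.card)
    (φ : Fin n → ∀ j, ZMod (p ^ α j)) :
    ∃ I' : Finset (Fin n), I' ⊂ I ∧ ∑ i ∈ I', φ i = ∑ i ∈ I, φ i := by
  classical
  have := Fact.mk hp
  let e : Fin r → ∀ j, ZMod (p ^ α j) := fun j => Pi.single j 1
  have he : ∀ j, p ^ α j • e j = 0 := fun j => by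
    rw [← Pi.single_smul, nsmul_one, ZMod.natCast_self, Pi.single_zero]
  have hJ : Ideal.span (Set.range fun j => single (e j) (1 : ZMod p) - 1) ^ #I = ⊥ :=
    Ideal.span_range_pow_eq_bot (fun j => single_sub_one_pow_eq_zero p (he j)) hI
  refine exists_ssubset_sum_eq_of_prod_single_sub_one_eq_zero (k := ZMod p) ?_
  rw [← Ideal.mem_bot, ← hJ, ← prod_const]
  exact Ideal.prod_mem_prod fun i _ =>
    single_sub_one_mem_span_of_mem_closure e (ZMod.pi_mem_closure_range_single_one (φ i))

/-- Descent step: if `|I| > ∑ (p^{αⱼ}-1)` (and `n > ∑ (p^{αⱼ}-1)`), then for any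
`φ : {1,…,n} → ℤ/p^{α₁}ℤ ⊕ ⋯ ⊕ ℤ/p^{α_r}ℤ` there is a proper subset `I' ⊊ I`
with the same `φ`-sum. -/
theorem descent_step (p : ℕ) (hp : p.Prime) (r : ℕ) (α : Fin r → ℕ)
    (hα : ∀ j, 0 < α j) (n : ℕ) (hn : ∑ j, (p ^ α j - 1) < n)
    (I : Finset (Fin n)) (hI : ∑ j, (p ^ α j - 1) < I.card)
    (φ : Fin n → ∀ j, ZMod (p ^ α j)) :
    ∃ I' : Finset (Fin n), I' ⊂ I ∧ ∑ i ∈ I', φ i = ∑ i ∈ I, φ i :=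
  descent_step_general p hp r α n I hI φ
end
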